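/- arXiv:2404.07384 — 2 statements merged into one kernel-verified Lean document; each statement's English description precedes it below -/
import Mathlib

section
/- For integers m ≥ 0, real n > 1, s > -1 and α ≥ 0, the integral ∫₀¹ t^{m+n/2-1}(1-t)^{s+α} S_m(t) dt equals (n-1)_m Γ(s+1+α) Γ(n+s+α) Γ(n/2) / (Γ(m+n+s+α) Γ(n/2+s+1+α)), where S_m(t) = ((n-1)_m/(n/2)_m) · ₂F₁(m, 1-n/2; m+n/2; t) and (x)_m denotes the Pochhammer symbol. -/
open MeasureTheory Real

/-- Pochhammer symbol (rising factorial) `(x)_k = x(x+1)⋯(x+k-1)`. -/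
noncomputable def poch (x : ℝ) (k : ℕ) : ℝ := ∏ i ∈ Finset.range k, (x + i)

/-- Gauss hypergeometric function `₂F₁(a,b;c;t)` as a series. -/
noncomputable def hyp2F1 (a b c t : ℝ) : ℝ :=
  ∑' k : ℕ, poch a k * poch b k / (poch c k * (Nat.factorial k)) * t ^ k

/-- The radial part `S_m(t) = ((n-1)_m/(n/2)_m) ₂F₁(m, 1-n/2; m+n/2; t)`. -/
noncomputable def Sfun (n : ℝ) (m : ℕ) (t : ℝ) : ℝ :=
  (poch (n - 1) m / poch (n / 2) m) * hyp2F1 m (1 - n / 2) (m + n / 2) t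

namespace SmAux

lemma poch_zero (x : ℝ) : poch x 0 = 1 := Finset.prod_range_zero _

lemma poch_succ (x : ℝ) (k : ℕ) : poch x (k + 1) = poch x k * (x + k) :=
  Finset.prod_range_succ _ _

lemma poch_succ' (x : ℝ) (k : ℕ) : poch x (k + 1) = x * poch (x + 1) k := by
  unfold poch
  rw [Finset.prod_range_succ']
  rw [mul_comm]
  congr 1
  · norm_num
  · exact Finset.prod_congr rfl fun i _ => by push_cast; ring

lemma poch_pos {x : ℝ} (hx : 0 < x) (k : ℕ) : 0 < poch x k :=
  Finset.prod_pos fun i _ => by positivity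

lemma poch_ne_zero {x : ℝ} (hx : 0 < x) (k : ℕ) : poch x k ≠ 0 :=
  (poch_pos hx k).ne'

lemma poch_nonneg {x : ℝ} (hx : 0 ≤ x) (k : ℕ) : 0 ≤ poch x k :=
  Finset.prod_nonneg fun i _ => by positivity

lemma Gamma_add_nat {x : ℝ} (hx : 0 < x) (k : ℕ) :
    Real.Gamma (x + k) = poch x k * Real.Gamma x := by
  induction k with
  | zero => simp [poch_zero]
  | succ k ih =>
    have hxk : x + k ≠ 0 := by positivity
    have : x + (k + 1 : ℕ) = (x + k) + 1 := by push_cast; ring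
    rw [this, Real.Gamma_add_one hxk, ih, poch_succ]
    ring

/-- the hypergeometric term -/
noncomputable def hterm (a b C : ℝ) (k : ℕ) : ℝ :=
  poch a k * poch b k / (poch C k * (Nat.factorial k))

lemma hyp2F1_eq (a b c t : ℝ) : hyp2F1 a b c t = ∑' k, hterm a b c k * t ^ k := rfl

lemma hterm_zero (a b C : ℝ) : hterm a b C 0 = 1 := by
  simp [hterm, poch_zero]

lemma hterm_succ {C : ℝ} (hC : 0 < C) (a b : ℝ) (k : ℕ) :
    hterm a b C (k + 1) = hterm a b C k * ((a + k) * (b + k) / ((C + k) * (k + 1))) := by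
  have h1 : poch C k ≠ 0 := poch_ne_zero hC k
  have h2 : (C + k) ≠ 0 := by positivity
  have h3 : ((k : ℝ) + 1) ≠ 0 := by positivity
  have h4 : ((Nat.factorial k : ℕ) : ℝ) ≠ 0 := Nat.cast_ne_zero.2 (Nat.factorial_ne_zero k)
  unfold hterm
  rw [poch_succ, poch_succ, poch_succ, Nat.factorial_succ]
  push_cast
  field_simp

lemma hterm_succ_left {C : ℝ} (hC : 0 < C) (a b : ℝ) (k : ℕ) :
    hterm (a - 1) b C (k + 1) = hterm a b C k * ((a - 1) * (b + k) / ((C + k) * (k + 1))) := by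
  have h1 : poch C k ≠ 0 := poch_ne_zero hC k
  have h2 : (C + k) ≠ 0 := by positivity
  have h3 : ((k : ℝ) + 1) ≠ 0 := by positivity
  have h4 : ((Nat.factorial k : ℕ) : ℝ) ≠ 0 := Nat.cast_ne_zero.2 (Nat.factorial_ne_zero k)
  unfold hterm
  rw [poch_succ', poch_succ, poch_succ, Nat.factorial_succ, sub_add_cancel]
  push_cast
  field_simp


/-! ### ratio domination helpers -/

lemma le_of_ratio {f w : ℕ → ℝ} (hf : ∀ k, 0 ≤ f k) (hw : ∀ k, 0 < w k) (K₀ : ℕ)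
    (h : ∀ k, K₀ ≤ k → f (k + 1) * w k ≤ f k * w (k + 1)) :
    ∀ k, K₀ ≤ k → f k * w K₀ ≤ f K₀ * w k := by
  intro k hk
  induction k, hk using Nat.le_induction with
  | base => exact le_refl _
  | succ k hk ih =>
    have h1 := h k hk
    have h2 : f (k + 1) * w K₀ * w k ≤ f K₀ * w (k + 1) * w k := by
      calc f (k + 1) * w K₀ * w k = (f (k + 1) * w k) * w K₀ := by ring
        _ ≤ (f k * w (k + 1)) * w K₀ := by
            exact mul_le_mul_of_nonneg_right h1 (hw K₀).le
        _ = (f k * w K₀) * w (k + 1) := by ring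
        _ ≤ (f K₀ * w k) * w (k + 1) := mul_le_mul_of_nonneg_right ih (hw (k + 1)).le
        _ = f K₀ * w (k + 1) * w k := by ring
    exact le_of_mul_le_mul_right h2 (hw k)

lemma summable_of_ratio {f w : ℕ → ℝ} (hf : ∀ k, 0 ≤ f k) (hw : ∀ k, 0 < w k)
    (hws : Summable w) (K₀ : ℕ)
    (h : ∀ k, K₀ ≤ k → f (k + 1) * w k ≤ f k * w (k + 1)) : Summable f := by
  have key := le_of_ratio hf hw K₀ h
  rw [← summable_nat_add_iff K₀]
  apply Summable.of_nonneg_of_le (f := fun k => (f K₀ / w K₀) * w (k + K₀)) (fun k => hf _)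
  · intro k
    have hk : K₀ ≤ k + K₀ := Nat.le_add_left _ _
    have := key (k + K₀) hk
    rw [div_mul_eq_mul_div, le_div_iff₀ (hw K₀)]
    linarith [this]
  · exact ((summable_nat_add_iff K₀).2 hws).mul_left _

lemma tendsto_zero_of_ratio {f w : ℕ → ℝ} (hf : ∀ k, 0 ≤ f k) (hw : ∀ k, 0 < w k)
    (hwz : Filter.Tendsto w Filter.atTop (nhds 0)) (K₀ : ℕ)
    (h : ∀ k, K₀ ≤ k → f (k + 1) * w k ≤ f k * w (k + 1)) :
    Filter.Tendsto f Filter.atTop (nhds 0) := by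
  have key := le_of_ratio hf hw K₀ h
  apply squeeze_zero' (Filter.Eventually.of_forall hf)
    (g := fun k => (f K₀ / w K₀) * w k)
  · filter_upwards [Filter.eventually_ge_atTop K₀] with k hk
    have := key k hk
    rw [div_mul_eq_mul_div, le_div_iff₀ (hw K₀)]
    linarith [this]
  · simpa using hwz.const_mul (f K₀ / w K₀)


/-! ### the comparison sequence -/

noncomputable def wseq (x y : ℝ) (k : ℕ) : ℝ := poch x k / poch y k

lemma wseq_pos {x y : ℝ} (hx : 0 < x) (hy : 0 < y) (k : ℕ) : 0 < wseq x y k :=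
  div_pos (poch_pos hx k) (poch_pos hy k)

lemma wseq_succ {y : ℝ} (hy : 0 < y) (x : ℝ) (k : ℕ) :
    wseq x y (k + 1) = wseq x y k * ((x + k) / (y + k)) := by
  have h1 : poch y k ≠ 0 := poch_ne_zero hy k
  have h2 : (y + k) ≠ 0 := by positivity
  unfold wseq
  rw [poch_succ, poch_succ]
  field_simp

lemma sum_range_wseq {x y : ℝ} (hx : 0 < x) (hxy : x + 1 < y) (K : ℕ) :
    ∑ k ∈ Finset.range K, wseq x y k
      = (y - 1) / (y - 1 - x) * (1 - poch x K / poch (y - 1) K) := by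
  have hy1 : 0 < y - 1 := by linarith
  have hyx0 : (0:ℝ) < y - 1 - x := by linarith
  have hyx : y - 1 - x ≠ 0 := hyx0.ne'
  induction K with
  | zero => simp [poch_zero]
  | succ K ih =>
    rw [Finset.sum_range_succ, ih]
    have hZ : poch (y - 1) K ≠ 0 := poch_ne_zero hy1 K
    have hZK : (y - 1 + K) ≠ 0 := by positivity
    have hY : poch y K ≠ 0 := poch_ne_zero (by linarith : (0:ℝ) < y) K
    have hrel : (y - 1) * poch y K = poch (y - 1) K * (y - 1 + K) := by
      have h1 : poch (y - 1) (K + 1) = (y - 1) * poch (y - 1 + 1) K := poch_succ' _ _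
      rw [sub_add_cancel] at h1
      rw [← h1, poch_succ]
    have hpY : poch y K = poch (y - 1) K * (y - 1 + K) / (y - 1) := by
      rw [eq_div_iff hy1.ne']
      linarith [hrel]
    unfold wseq
    rw [hpY, poch_succ x, poch_succ (y - 1)]
    field_simp
    ring

lemma summable_wseq {x y : ℝ} (hx : 0 < x) (hxy : x + 1 < y) : Summable (wseq x y) := by
  have hy1 : 0 < y - 1 := by linarith
  apply summable_of_sum_range_le (c := (y - 1) / (y - 1 - x))
    (fun k => (wseq_pos hx (by linarith) k).le)
  intro n
  rw [sum_range_wseq hx hxy]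
  have h1 : 0 ≤ poch x n / poch (y - 1) n :=
    (div_pos (poch_pos hx n) (poch_pos hy1 n)).le
  have h2 : 0 ≤ (y - 1) / (y - 1 - x) := div_nonneg (by linarith) (by linarith)
  nlinarith

lemma tendsto_wseq {x y : ℝ} (hx : 0 < x) (hxy : x < y) :
    Filter.Tendsto (wseq x y) Filter.atTop (nhds 0) := by
  have hy : (0:ℝ) < y := lt_trans hx hxy
  have hS : Filter.Tendsto (fun K => ∑ i ∈ Finset.range K, (y + i)⁻¹)
      Filter.atTop Filter.atTop := by
    apply Filter.tendsto_atTop_mono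
      (f := fun K => (y + 1)⁻¹ * ∑ i ∈ Finset.range K, (1 / (i + 1) : ℝ))
    · intro n
      rw [Finset.mul_sum]
      apply Finset.sum_le_sum
      intro i _
      have hi : (0:ℝ) ≤ (i:ℝ) := Nat.cast_nonneg i
      rw [inv_eq_one_div, inv_eq_one_div, div_mul_div_comm, one_mul,
        div_le_div_iff₀ (by positivity) (by positivity), one_mul]
      nlinarith
    · exact Real.tendsto_sum_range_one_div_nat_succ_atTop.const_mul_atTop (by positivity)
  have hexp : Filter.Tendsto (fun K => Real.exp (-(y - x) * ∑ i ∈ Finset.range K, (y + i)⁻¹))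
      Filter.atTop (nhds 0) := by
    apply Real.tendsto_exp_atBot.comp
    have h1 := hS.const_mul_atTop (show (0:ℝ) < y - x by linarith)
    have h2 := Filter.tendsto_neg_atTop_atBot.comp h1
    apply h2.congr
    intro K
    simp only [Function.comp_apply]
    ring
  apply squeeze_zero' (Filter.Eventually.of_forall fun k => (wseq_pos hx hy k).le)
    (Filter.Eventually.of_forall ?_) hexp
  intro K
  have hprod : wseq x y K = ∏ i ∈ Finset.range K, ((x + i) / (y + i)) := by
    unfold wseq poch
    rw [Finset.prod_div_distrib]
  rw [hprod]
  have hsum : -(y - x) * ∑ i ∈ Finset.range K, (y + (i:ℝ))⁻¹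
      = ∑ i ∈ Finset.range K, -((y - x) * (y + (i:ℝ))⁻¹) := by
    rw [Finset.mul_sum]
    exact Finset.sum_congr rfl fun i _ => by ring
  rw [hsum, Real.exp_sum]
  apply Finset.prod_le_prod
  · intro i _
    positivity
  · intro i _
    have hyi : (0:ℝ) < y + i := by positivity
    have heq : (x + i) / (y + i) = -((y - x) * (y + (i:ℝ))⁻¹) + 1 := by
      field_simp
      ring
    rw [heq]
    exact Real.add_one_le_exp _
  
/-! ### eventual cubic inequality -/

lemma eventually_cubic (A B y C x : ℝ) (hlt : A + B + y < C + 1 + x) :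
    ∃ K₀ : ℕ, ∀ k : ℕ, K₀ ≤ k →
      0 ≤ A + k ∧ 0 ≤ B + k ∧ (A + k) * (B + k) * (y + k) ≤ (C + k) * (1 + k) * (x + k) := by
  set ε := C + 1 + x - (A + B + y) with hεdef
  have hε : 0 < ε := by simp only [hεdef]; linarith
  set β := (C + C * x + x) - (A * B + A * y + B * y) with hβdef
  set γ := C * x - A * B * y with hγdef
  obtain ⟨K₀, hK₀⟩ := exists_nat_ge (max (max (-A) (-B)) ((|β| + |γ|) / ε + 1))
  refine ⟨K₀, fun k hk => ?_⟩
  have hk' : max (max (-A) (-B)) ((|β| + |γ|) / ε + 1) ≤ (k : ℝ) :=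
    le_trans hK₀ (Nat.cast_le.2 hk)
  have hA : 0 ≤ A + k := by
    have := le_trans (le_trans (le_max_left _ _) (le_max_left _ _)) hk'
    linarith
  have hB : 0 ≤ B + k := by
    have := le_trans (le_trans (le_max_right _ _) (le_max_left _ _)) hk'
    linarith
  have hd : (|β| + |γ|) / ε + 1 ≤ (k : ℝ) := le_trans (le_max_right _ _) hk'
  have hdiv : 0 ≤ (|β| + |γ|) / ε := by positivity
  have hk1 : 1 ≤ (k : ℝ) := by linarith
  have hkε : |β| + |γ| ≤ ε * k := by
    have hd2 : (|β| + |γ|) / ε ≤ (k:ℝ) := by linarith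
    rw [div_le_iff₀ hε] at hd2
    rw [mul_comm]
    exact hd2
  refine ⟨hA, hB, ?_⟩
  have hβ1 : -|β| ≤ β := neg_abs_le β
  have hγ1 : -|γ| ≤ γ := neg_abs_le γ
  have hmul : (|β| + |γ|) * k ≤ (ε * k) * k :=
    mul_le_mul_of_nonneg_right hkε (by positivity)
  have habs : |β| * 1 ≤ |β| * k :=
    mul_le_mul_of_nonneg_left hk1 (abs_nonneg β)
  have habs2 : |γ| * 1 ≤ |γ| * k :=
    mul_le_mul_of_nonneg_left hk1 (abs_nonneg γ)
  have key : 0 ≤ ε * (k:ℝ) ^ 2 + β * k + γ := by nlinarith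
  have e1 : ε * (k:ℝ) ^ 2 = (C + 1 + x - (A + B + y)) * (k:ℝ) ^ 2 := by rw [hεdef]
  have e2 : β * (k:ℝ) = ((C + C * x + x) - (A * B + A * y + B * y)) * (k:ℝ) := by rw [hβdef]
  have e3 : γ = C * x - A * B * y := hγdef
  nlinarith [key, e1, e2, e3]


/-! ### summability and decay of hypergeometric terms -/

lemma abs_hterm_succ {a b C : ℝ} (hC : 0 < C) {k : ℕ} (hA : 0 ≤ a + k) (hB : 0 ≤ b + k) :
    |hterm a b C (k + 1)| = |hterm a b C k| * ((a + k) * (b + k) / ((C + k) * (k + 1))) := by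
  rw [hterm_succ hC, abs_mul]
  congr 1
  exact abs_of_nonneg (div_nonneg (mul_nonneg hA hB) (by positivity))

lemma summable_abs_hterm (a b C : ℝ) (hC : 0 < C) (hd : a + b < C) :
    Summable (fun k => |hterm a b C k|) := by
  have hδ : 0 < C - a - b := by linarith
  set y : ℝ := 2 + (C - a - b) / 2 with hydef
  have hy : (0:ℝ) < y := by simp only [hydef]; linarith
  obtain ⟨K₀, hcub⟩ := eventually_cubic a b y C 1 (by simp only [hydef]; linarith)
  apply summable_of_ratio (w := wseq 1 y) (fun k => abs_nonneg _)
    (fun k => wseq_pos one_pos hy k) (summable_wseq one_pos (by simp only [hydef]; linarith)) K₀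
  intro k hk
  obtain ⟨hA, hB, hcool⟩ := hcub k hk
  rw [abs_hterm_succ hC hA hB, wseq_succ hy 1 k]
  have hw := (wseq_pos one_pos hy k).le
  have h0 := abs_nonneg (hterm a b C k)
  have hrat : (a + k) * (b + k) / ((C + k) * (k + 1)) ≤ (1 + k) / (y + k) := by
    rw [div_le_div_iff₀ (by positivity) (by positivity)]
    nlinarith [hcool]
  calc |hterm a b C k| * ((a + k) * (b + k) / ((C + k) * (k + 1))) * wseq 1 y k
      = (|hterm a b C k| * wseq 1 y k) * ((a + k) * (b + k) / ((C + k) * (k + 1))) := by ring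
    _ ≤ (|hterm a b C k| * wseq 1 y k) * ((1 + k) / (y + k)) :=
        mul_le_mul_of_nonneg_left hrat (mul_nonneg h0 hw)
    _ = |hterm a b C k| * (wseq 1 y k * ((1 + k) / (y + k))) := by ring

lemma summable_hterm (a b C : ℝ) (hC : 0 < C) (hd : a + b < C) :
    Summable (fun k => hterm a b C k) :=
  (summable_abs_hterm a b C hC hd).of_abs

lemma tendsto_abs_mul_hterm (a b C : ℝ) (hC : 0 < C) (hd : a + b < C) :
    Filter.Tendsto (fun k => |(b + k) * hterm a b C k|) Filter.atTop (nhds 0) := by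
  have hδ : 0 < C - a - b := by linarith
  set y : ℝ := 1 + (C - a - b) / 2 with hydef
  have hy : (0:ℝ) < y := by simp only [hydef]; linarith
  have hy1 : (1:ℝ) < y := by simp only [hydef]; linarith
  obtain ⟨K₀, hcub⟩ := eventually_cubic a (b + 1) y C 1 (by simp only [hydef]; linarith)
  obtain ⟨Kb, hKb⟩ := exists_nat_ge (-b)
  apply tendsto_zero_of_ratio (w := wseq 1 y) (fun k => abs_nonneg _)
    (fun k => wseq_pos one_pos hy k) (tendsto_wseq one_pos hy1) (max K₀ Kb)
  intro k hk
  obtain ⟨hA, hB1, hcool⟩ := hcub k (le_trans (le_max_left _ _) hk)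
  have hBk : 0 ≤ b + k := by
    have h1 : (Kb : ℝ) ≤ k := Nat.cast_le.2 (le_trans (le_max_right _ _) hk)
    linarith
  have hstep : |(b + ((k:ℕ)+1:ℕ)) * hterm a b C (k + 1)|
      = |(b + k) * hterm a b C k| * ((a + k) * ((b + 1) + k) / ((C + k) * (k + 1))) := by
    rw [abs_mul, abs_mul, abs_hterm_succ hC hA hBk,
      abs_of_nonneg (show (0:ℝ) ≤ b + ((k:ℕ)+1:ℕ) by push_cast; linarith),
      abs_of_nonneg hBk]
    push_cast
    ring
  rw [hstep, wseq_succ hy 1 k]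
  have hw := (wseq_pos one_pos hy k).le
  have h0 := abs_nonneg ((b + k) * hterm a b C k)
  have hrat : (a + k) * ((b + 1) + k) / ((C + k) * (k + 1)) ≤ (1 + k) / (y + k) := by
    rw [div_le_div_iff₀ (by positivity) (by positivity)]
    nlinarith [hcool]
  calc |(b + k) * hterm a b C k| * ((a + k) * ((b + 1) + k) / ((C + k) * (k + 1))) * wseq 1 y k
      = (|(b + k) * hterm a b C k| * wseq 1 y k)
          * ((a + k) * ((b + 1) + k) / ((C + k) * (k + 1))) := by ring
    _ ≤ (|(b + k) * hterm a b C k| * wseq 1 y k) * ((1 + k) / (y + k)) :=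
        mul_le_mul_of_nonneg_left hrat (mul_nonneg h0 hw)
    _ = |(b + k) * hterm a b C k| * (wseq 1 y k * ((1 + k) / (y + k))) := by ring


/-! ### telescoping and the Gauss summation for integer first parameter -/

lemma tel {C : ℝ} (hC : 0 < C) (a b : ℝ) (k : ℕ) :
    (C - a - b) * hterm a b C (k + 1) - (C - a) * hterm (a - 1) b C (k + 1)
      = (-(b + ((k:ℝ) + 1)) * hterm a b C (k + 1)) - (-(b + (k:ℝ)) * hterm a b C k) := by
  rw [hterm_succ hC, hterm_succ_left hC]
  have h2 : (C + (k:ℝ)) ≠ 0 := by positivity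
  have h3 : ((k:ℝ) + 1) ≠ 0 := by positivity
  field_simp
  ring

lemma sum_tel {C : ℝ} (hC : 0 < C) (a b : ℝ) (K : ℕ) :
    ∑ k ∈ Finset.range (K + 1),
        ((C - a - b) * hterm a b C k - (C - a) * hterm (a - 1) b C k)
      = -(b + (K:ℝ)) * hterm a b C K := by
  induction K with
  | zero =>
    rw [Finset.sum_range_one]
    simp [hterm_zero]
  | succ K ih =>
    rw [Finset.sum_range_succ, ih]
    have h := tel hC a b K
    push_cast
    push_cast at h
    linarith

lemma contiguous {a b C : ℝ} (hC : 0 < C) (hd : a + b < C) (hd1 : (a - 1) + b < C) :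
    (C - a - b) * ∑' k, hterm a b C k = (C - a) * ∑' k, hterm (a - 1) b C k := by
  have hSa := summable_hterm a b C hC hd
  have hSa1 := summable_hterm (a - 1) b C hC hd1
  have hSD : Summable (fun k => (C - a - b) * hterm a b C k
      - (C - a) * hterm (a - 1) b C k) := (hSa.mul_left _).sub (hSa1.mul_left _)
  have h1 := hSD.hasSum.tendsto_sum_nat
  have h2 := h1.comp (Filter.tendsto_add_atTop_nat 1)
  have h2' : Filter.Tendsto (fun K : ℕ => -(b + (K:ℝ)) * hterm a b C K) Filter.atTop
      (nhds (∑' k, ((C - a - b) * hterm a b C k - (C - a) * hterm (a - 1) b C k))) := by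
    apply h2.congr
    intro K
    exact sum_tel hC a b K
  have h3 : Filter.Tendsto (fun K : ℕ => -(b + (K:ℝ)) * hterm a b C K) Filter.atTop (nhds 0) := by
    rw [tendsto_zero_iff_norm_tendsto_zero]
    have := tendsto_abs_mul_hterm a b C hC hd
    apply this.congr
    intro k
    rw [Real.norm_eq_abs, neg_mul, abs_neg]
  have h5 : ∑' k, ((C - a - b) * hterm a b C k - (C - a) * hterm (a - 1) b C k) = 0 :=
    tendsto_nhds_unique h2' h3
  have h6 : ∑' k, ((C - a - b) * hterm a b C k - (C - a) * hterm (a - 1) b C k)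
      = (C - a - b) * ∑' k, hterm a b C k - (C - a) * ∑' k, hterm (a - 1) b C k := by
    rw [Summable.tsum_sub (hSa.mul_left _) (hSa1.mul_left _), tsum_mul_left, tsum_mul_left]
  rw [h6] at h5
  linarith

lemma gauss_nat : ∀ (m : ℕ) (b C : ℝ), (m:ℝ) < C → (m:ℝ) + b < C →
    ∑' k, hterm (m:ℝ) b C k = poch (C - m) m / poch (C - m - b) m := by
  intro m
  induction m with
  | zero =>
    intro b C h1 h2
    rw [tsum_eq_single 0 ?_]
    · simp [hterm_zero, poch_zero]
    · intro k hk
      obtain ⟨j, rfl⟩ := Nat.exists_eq_succ_of_ne_zero hk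
      unfold hterm
      rw [show ((0:ℕ):ℝ) = 0 by norm_num, poch_succ']
      simp
  | succ m ih =>
    intro b C h1 h2
    push_cast at h1 h2
    have hC : 0 < C := by
      have : (0:ℝ) ≤ (m:ℝ) := Nat.cast_nonneg m
      linarith
    have hd : ((m:ℝ) + 1) + b < C := by linarith
    have hd1 : (((m:ℝ) + 1) - 1) + b < C := by linarith
    have hcont := contiguous (a := (m:ℝ) + 1) hC hd hd1
    rw [show ((m:ℝ) + 1 - 1) = (m:ℝ) by ring] at hcont
    have hih := ih b C (by linarith) (by linarith)
    rw [hih] at hcont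
    have hpos1 : 0 < C - (m:ℝ) - 1 - b := by linarith
    have hpos2 : 0 < C - (m:ℝ) - b := by linarith
    have hposP : 0 < poch (C - (m:ℝ) - b) m := poch_pos hpos2 m
    push_cast
    rw [poch_succ', poch_succ',
      show C - ((m:ℝ) + 1) + 1 = C - m by ring,
      show C - ((m:ℝ) + 1) - b + 1 = C - m - b by ring]
    rw [eq_div_iff (by
      apply mul_ne_zero
      · intro h; rw [show C - ((m:ℝ)+1) - b = C - m - 1 - b by ring] at h; linarith
      · exact (poch_pos hpos2 m).ne')]
    field_simp [hposP.ne'] at hcont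
    linear_combination hcont
  

/-! ### the real Beta integral on `Ioo 0 1` -/

lemma complex_integrand_eq {p q t : ℝ} (ht : t ∈ Set.Ioo (0:ℝ) 1) :
    (t:ℂ) ^ ((p:ℂ) - 1) * ((1:ℂ) - (t:ℂ)) ^ ((q:ℂ) - 1)
      = ((t ^ (p - 1) * (1 - t) ^ (q - 1) : ℝ) : ℂ) := by
  obtain ⟨ht0, ht1⟩ := ht
  rw [Complex.ofReal_mul, Complex.ofReal_cpow ht0.le, Complex.ofReal_cpow (by linarith : (0:ℝ) ≤ 1 - t)]
  push_cast
  ring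

lemma integrableOn_beta {p q : ℝ} (hp : 0 < p) (hq : 0 < q) :
    IntegrableOn (fun t : ℝ => t ^ (p - 1) * (1 - t) ^ (q - 1)) (Set.Ioo (0:ℝ) 1) := by
  have hconv := Complex.betaIntegral_convergent (u := (p:ℂ)) (v := (q:ℂ))
    (by simpa using hp) (by simpa using hq)
  rw [intervalIntegrable_iff, Set.uIoc_of_le (by norm_num : (0:ℝ) ≤ 1)] at hconv
  have h2 : IntegrableOn (fun x : ℝ => (x:ℂ) ^ ((p:ℂ) - 1) * ((1:ℂ) - (x:ℂ)) ^ ((q:ℂ) - 1))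
      (Set.Ioo (0:ℝ) 1) volume := hconv.mono_set Set.Ioo_subset_Ioc_self
  have h3 := h2.re
  apply (integrableOn_congr_fun ?_ measurableSet_Ioo).mp h3
  intro t ht
  have h4 := complex_integrand_eq (p := p) (q := q) ht
  show RCLike.re _ = _
  rw [h4]
  rfl

lemma beta_Ioo {p q : ℝ} (hp : 0 < p) (hq : 0 < q) :
    ∫ t in Set.Ioo (0:ℝ) 1, t ^ (p - 1) * (1 - t) ^ (q - 1)
      = Real.Gamma p * Real.Gamma q / Real.Gamma (p + q) := by
  have key : Complex.betaIntegral p q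
      = ((∫ t in Set.Ioo (0:ℝ) 1, t ^ (p - 1) * (1 - t) ^ (q - 1) : ℝ) : ℂ) := by
    rw [Complex.betaIntegral, intervalIntegral.integral_of_le (by norm_num : (0:ℝ) ≤ 1),
      MeasureTheory.integral_Ioc_eq_integral_Ioo]
    refine Eq.trans (MeasureTheory.setIntegral_congr_fun measurableSet_Ioo
      fun t ht => complex_integrand_eq ht) ?_
    exact integral_ofReal
  have hg := Complex.Gamma_mul_Gamma_eq_betaIntegral (s := (p:ℂ)) (t := (q:ℂ))
    (by simpa using hp) (by simpa using hq)
  rw [key, show (p:ℂ) + (q:ℂ) = ((p + q : ℝ) : ℂ) by push_cast; ring,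
    Complex.Gamma_ofReal, Complex.Gamma_ofReal, Complex.Gamma_ofReal,
    ← Complex.ofReal_mul, ← Complex.ofReal_mul] at hg
  have h := Complex.ofReal_inj.mp hg
  rw [eq_div_iff (Real.Gamma_pos_of_pos (by linarith)).ne']
  linarith

lemma pow_beta_eqOn {c q : ℝ} (k : ℕ) :
    Set.EqOn (fun t : ℝ => t ^ (c - 1) * (1 - t) ^ q * t ^ k)
      (fun t : ℝ => t ^ ((c + k) - 1) * (1 - t) ^ ((q + 1) - 1)) (Set.Ioo (0:ℝ) 1) := by
  intro t ht
  obtain ⟨ht0, ht1⟩ := ht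
  simp only
  rw [show ((q:ℝ) + 1) - 1 = q by ring]
  rw [← Real.rpow_natCast t k, mul_right_comm, ← Real.rpow_add ht0,
    show c - 1 + (k:ℝ) = c + k - 1 by ring]

lemma integrableOn_pow_beta {c q : ℝ} (hc : 0 < c) (hq : -1 < q) (k : ℕ) :
    IntegrableOn (fun t : ℝ => t ^ (c - 1) * (1 - t) ^ q * t ^ k) (Set.Ioo (0:ℝ) 1) := by
  apply (integrableOn_congr_fun (pow_beta_eqOn k) measurableSet_Ioo).mpr
  exact integrableOn_beta (by positivity) (by linarith)

lemma integral_pow_beta {c q : ℝ} (hc : 0 < c) (hq : -1 < q) (k : ℕ) :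
    ∫ t in Set.Ioo (0:ℝ) 1, t ^ (c - 1) * (1 - t) ^ q * t ^ k
      = Real.Gamma (c + k) * Real.Gamma (q + 1) / Real.Gamma ((c + q + 1) + k) := by
  rw [MeasureTheory.setIntegral_congr_fun measurableSet_Ioo (pow_beta_eqOn k),
    beta_Ioo (by positivity) (by linarith)]
  rw [show (c + (k:ℝ)) + (q + 1) = (c + q + 1) + k by ring]

end SmAux

open SmAux in
/-- for `m ∈ ℕ`, `n > 1`, `s > -1`, `α ≥ 0`,
`∫₀¹ t^{m+n/2-1}(1-t)^{s+α} S_m(t) dt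
  = (n-1)_m Γ(s+1+α) Γ(n+s+α) Γ(n/2) / (Γ(m+n+s+α) Γ(n/2+s+1+α))`. -/
theorem integral_Sm (m : ℕ) (n s α : ℝ) (hn : 1 < n) (hs : -1 < s) (hα : 0 ≤ α) :
    ∫ t in Set.Ioo (0:ℝ) 1, t ^ ((m:ℝ) + n / 2 - 1) * (1 - t) ^ (s + α) * Sfun n m t
      = poch (n - 1) m * Real.Gamma (s + 1 + α) * Real.Gamma (n + s + α) * Real.Gamma (n / 2)
        / (Real.Gamma (m + n + s + α) * Real.Gamma (n / 2 + s + 1 + α)) := by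
  have hm0 : (0:ℝ) ≤ (m:ℝ) := Nat.cast_nonneg m
  simp only [Sfun]
  set q : ℝ := s + α with hqdef
  have hq : -1 < q := by simp only [hqdef]; linarith
  set γ : ℝ := n / 2 with hγdef
  have hγ0 : 0 < γ := by simp only [hγdef]; linarith
  have hγhalf : 1 / 2 < γ := by simp only [hγdef]; linarith
  set b : ℝ := 1 - n / 2 with hbdef
  have hbγ : b = 1 - γ := by simp only [hbdef, hγdef]
  set c : ℝ := (m:ℝ) + n / 2 with hcdef
  have hcγ : c = (m:ℝ) + γ := by simp only [hcdef, hγdef]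
  have hc : 0 < c := by rw [hcγ]; linarith
  set C : ℝ := c + q + 1 with hCdef
  have hC0 : 0 < C := by simp only [hCdef]; linarith
  have hγq : 0 < γ + q + 1 := by linarith
  have hnq : 0 < n + q := by simp only [hγdef] at hγhalf; linarith
  have hCm : (m:ℝ) < C := by rw [hCdef, hcγ]; linarith
  have hCmb : (m:ℝ) + b < C := by
    rw [hCdef, hcγ, hbγ]
    have : 2 * γ = n := by simp only [hγdef]; ring
    linarith
  have hcmb : (m:ℝ) + b < c + 0 → True := fun _ => trivial
  -- the term functions
  set Fk : ℕ → ℝ → ℝ :=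
    fun k t => t ^ (c - 1) * (1 - t) ^ q * (hterm (m:ℝ) b c k * t ^ k) with hFkdef
  have hFk' : ∀ k, Fk k = fun t => hterm (m:ℝ) b c k * (t ^ (c - 1) * (1 - t) ^ q * t ^ k) :=
    fun k => funext fun t => by simp only [hFkdef]; ring
  -- integrability of each term
  have h_int : ∀ k, Integrable (Fk k) (volume.restrict (Set.Ioo (0:ℝ) 1)) := by
    intro k
    rw [hFk' k]
    exact (integrableOn_pow_beta hc hq k).const_mul _
  -- value of each term integral
  have h_val : ∀ k, ∫ t in Set.Ioo (0:ℝ) 1, Fk k t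
      = hterm (m:ℝ) b c k * (Real.Gamma (c + k) * Real.Gamma (q + 1) / Real.Gamma (C + k)) := by
    intro k
    rw [hFk' k, MeasureTheory.integral_const_mul, integral_pow_beta hc hq k, hCdef]
  -- transfer c-denominator to C-denominator
  have hterm_rel : ∀ k, hterm (m:ℝ) b c k * (Real.Gamma (c + k) * Real.Gamma (q + 1) / Real.Gamma (C + k))
      = (Real.Gamma c * Real.Gamma (q + 1) / Real.Gamma C) * hterm (m:ℝ) b C k := by
    intro k
    rw [Gamma_add_nat hc k, Gamma_add_nat hC0 k]
    unfold hterm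
    have h1 : poch c k ≠ 0 := poch_ne_zero hc k
    have h2 : poch C k ≠ 0 := poch_ne_zero hC0 k
    have h3 : Real.Gamma C ≠ 0 := (Real.Gamma_pos_of_pos hC0).ne'
    have h4 : ((Nat.factorial k : ℕ) : ℝ) ≠ 0 := Nat.cast_ne_zero.2 (Nat.factorial_ne_zero k)
    field_simp
  -- norm integrals and their summability
  have h_norm : ∀ k, ∫ t in Set.Ioo (0:ℝ) 1, ‖Fk k t‖
      = (Real.Gamma c * Real.Gamma (q + 1) / Real.Gamma C) * |hterm (m:ℝ) b C k| := by
    intro k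
    have heq : Set.EqOn (fun t => ‖Fk k t‖)
        (fun t => |hterm (m:ℝ) b c k| * (t ^ (c - 1) * (1 - t) ^ q * t ^ k))
        (Set.Ioo (0:ℝ) 1) := by
      intro t ht
      obtain ⟨ht0, ht1⟩ := ht
      rw [hFk' k]
      show ‖_ * _‖ = _
      have hX : (0:ℝ) ≤ t ^ (c - 1) * (1 - t) ^ q * t ^ k :=
        mul_nonneg (mul_nonneg (Real.rpow_nonneg ht0.le _)
          (Real.rpow_nonneg (by linarith) _)) (pow_nonneg ht0.le k)
      rw [Real.norm_eq_abs, abs_mul, abs_of_nonneg hX]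
    rw [MeasureTheory.setIntegral_congr_fun measurableSet_Ioo heq,
      MeasureTheory.integral_const_mul, integral_pow_beta hc hq k, ← hCdef]
    have hg1 : 0 < Real.Gamma (c + k) := Real.Gamma_pos_of_pos (by positivity)
    have hg2 : 0 < Real.Gamma (q + 1) := Real.Gamma_pos_of_pos (by linarith)
    have hg3 : 0 < Real.Gamma (C + k) := Real.Gamma_pos_of_pos (by positivity)
    have hg4 : 0 < Real.Gamma c := Real.Gamma_pos_of_pos hc
    have hg5 : 0 < Real.Gamma C := Real.Gamma_pos_of_pos hC0
    have hRpos : 0 < Real.Gamma (c + k) * Real.Gamma (q + 1) / Real.Gamma (C + k) := by positivity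
    have hKpos : 0 < Real.Gamma c * Real.Gamma (q + 1) / Real.Gamma C := by positivity
    calc |hterm (m:ℝ) b c k| * (Real.Gamma (c + k) * Real.Gamma (q + 1) / Real.Gamma (C + k))
        = |hterm (m:ℝ) b c k * (Real.Gamma (c + k) * Real.Gamma (q + 1) / Real.Gamma (C + k))| := by
          rw [abs_mul, abs_of_pos hRpos]
      _ = |(Real.Gamma c * Real.Gamma (q + 1) / Real.Gamma C) * hterm (m:ℝ) b C k| := by
          rw [hterm_rel k]
      _ = (Real.Gamma c * Real.Gamma (q + 1) / Real.Gamma C) * |hterm (m:ℝ) b C k| := by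
          rw [abs_mul, abs_of_pos hKpos]
  have h_sum : Summable (fun k => ∫ t in Set.Ioo (0:ℝ) 1, ‖Fk k t‖) := by
    apply Summable.congr (f := fun k =>
      (Real.Gamma c * Real.Gamma (q + 1) / Real.Gamma C) * |hterm (m:ℝ) b C k|)
    · exact (summable_abs_hterm (m:ℝ) b C hC0 hCmb).mul_left _
    · intro k
      exact (h_norm k).symm
  -- the swap
  have hswap := MeasureTheory.integral_tsum_of_summable_integral_norm
    (μ := volume.restrict (Set.Ioo (0:ℝ) 1)) (F := Fk) h_int h_sum
  -- evaluate the sum side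
  have hsum_eval : ∑' k, ∫ t in Set.Ioo (0:ℝ) 1, Fk k t
      = (Real.Gamma c * Real.Gamma (q + 1) / Real.Gamma C)
          * (poch (C - m) m / poch (C - m - b) m) := by
    rw [tsum_congr (fun k => (h_val k).trans (hterm_rel k)), tsum_mul_left,
      gauss_nat m b C hCm hCmb]
  -- identify the integral side with the goal integrand
  have hpt : ∀ t : ℝ, ∑' k, Fk k t
      = t ^ (c - 1) * (1 - t) ^ q * hyp2F1 (m:ℝ) b c t := by
    intro t
    simp only [hFkdef]
    rw [tsum_mul_left, hyp2F1_eq]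
  have hLHS : ∫ t in Set.Ioo (0:ℝ) 1,
        t ^ (c - 1) * (1 - t) ^ q * (poch (n - 1) m / poch (n / 2) m * hyp2F1 (m:ℝ) b c t)
      = (poch (n - 1) m / poch (n / 2) m) *
          ∫ t in Set.Ioo (0:ℝ) 1, (∑' k, Fk k t) := by
    rw [← MeasureTheory.integral_const_mul]
    apply MeasureTheory.setIntegral_congr_fun measurableSet_Ioo
    intro t _
    show t ^ (c - 1) * (1 - t) ^ q * (poch (n - 1) m / poch (n / 2) m * hyp2F1 (m:ℝ) b c t)
        = poch (n - 1) m / poch (n / 2) m * ∑' k, Fk k t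
    rw [hpt t]
    ring
  rw [hLHS, ← hswap, hsum_eval]
  -- final Gamma algebra
  have e1 : Real.Gamma c = poch γ m * Real.Gamma γ := by
    rw [hcγ, add_comm, Gamma_add_nat hγ0 m]
  have e2 : Real.Gamma C = poch (γ + q + 1) m * Real.Gamma (γ + q + 1) := by
    rw [show C = (γ + q + 1) + (m:ℝ) by rw [hCdef, hcγ]; ring, Gamma_add_nat hγq m]
  have e3 : C - (m:ℝ) = γ + q + 1 := by rw [hCdef, hcγ]; ring
  have e4 : C - (m:ℝ) - b = n + q := by
    rw [hCdef, hcγ, hbγ]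
    have : 2 * γ = n := by simp only [hγdef]; ring
    linarith
  have e5 : Real.Gamma (s + 1 + α) = Real.Gamma (q + 1) := by
    rw [show s + 1 + α = q + 1 by rw [hqdef]; ring]
  have e6 : Real.Gamma (n + s + α) = Real.Gamma (n + q) := by
    rw [show n + s + α = n + q by rw [hqdef]; ring]
  have e7 : Real.Gamma ((m:ℝ) + n + s + α) = poch (n + q) m * Real.Gamma (n + q) := by
    rw [show (m:ℝ) + n + s + α = (n + q) + (m:ℝ) by rw [hqdef]; ring, Gamma_add_nat hnq m]
  have e8 : Real.Gamma (n / 2 + s + 1 + α) = Real.Gamma (γ + q + 1) := by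
    rw [show n / 2 + s + 1 + α = γ + q + 1 by rw [hγdef, hqdef]; ring]
  rw [e1, e2, e4, e3, e5, e6, e7, e8]
  have p1 : poch γ m ≠ 0 := poch_ne_zero hγ0 m
  have p2 : poch (γ + q + 1) m ≠ 0 := poch_ne_zero hγq m
  have p3 : poch (n + q) m ≠ 0 := poch_ne_zero hnq m
  have p4 : Real.Gamma (γ + q + 1) ≠ 0 := (Real.Gamma_pos_of_pos hγq).ne'
  have p5 : Real.Gamma (n + q) ≠ 0 := (Real.Gamma_pos_of_pos hnq).ne'
  have p6 : poch (n / 2) m = poch γ m := by rw [hγdef]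
  rw [p6]
  field_simp
end

section
/- For every integer m ≥ 0 and real x: (2x)^k = Σ_{j=0}^k (c_{j,k}(m)/(m)_j) (x + m/2)_j, where c_{j,k}(m) := (m)_j (Δ₋^j/j!)(2y - m)^k evaluated at y = 0 and Δ₋ f(y) = f(y) - f(y-1) is the backward difference operator. -/
/-- Backward difference operator `Δ₋ f(y) = f(y) - f(y-1)`. -/
def bdiff (f : ℝ → ℝ) : ℝ → ℝ := fun y => f y - f (y - 1)

/-- `c_{j,k}(m) = (m)_j (Δ₋^j/j!)(2y-m)^k |_{y=0}`;
here `cpoly j k m / (m)_j = (Δ₋^j/j!)(2y-m)^k |_{y=0}` by construction. -/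
noncomputable def cpoly (j k : ℕ) (m : ℕ) : ℝ :=
  poch m j * (bdiff^[j] (fun y : ℝ => (2 * y - m) ^ k) 0 / (Nat.factorial j))

/- ### Auxiliary lemmas -/

lemma poch_zero (x : ℝ) : poch x 0 = 1 := by simp [poch]

lemma bdiff_poch (j : ℕ) :
    bdiff (fun x => poch x (j + 1)) = fun x => (j + 1 : ℝ) * poch x j := by
  funext x
  have h1 : poch x (j + 1) = poch x j * (x + j) := by
    simp [poch, Finset.prod_range_succ]
  have h2 : poch (x - 1) (j + 1) = poch x j * (x - 1) := by
    simp only [poch]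
    rw [Finset.prod_range_succ']
    congr 1
    · exact Finset.prod_congr rfl fun i _ => by push_cast; ring
    · norm_num
  simp only [bdiff, h1, h2]
  ring

lemma bdiff_iter_smul (c : ℝ) (g : ℝ → ℝ) (i : ℕ) :
    bdiff^[i] (fun y => c * g y) = fun y => c * bdiff^[i] g y := by
  induction i with
  | zero => rfl
  | succ i ih =>
      rw [Function.iterate_succ']
      funext y
      simp only [Function.comp_apply, ih, bdiff]
      ring

lemma bdiff_iter_sum {ι : Type*} (s : Finset ι) (g : ι → ℝ → ℝ) (i : ℕ) :
    bdiff^[i] (fun y => ∑ a ∈ s, g a y) = fun y => ∑ a ∈ s, bdiff^[i] (g a) y := by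
  induction i with
  | zero => rfl
  | succ i ih =>
      rw [Function.iterate_succ']
      funext y
      simp only [Function.comp_apply, ih, bdiff]
      rw [Finset.sum_sub_distrib]

lemma bdiff_iter_poch (i j : ℕ) :
    bdiff^[i] (fun x => poch x j) = fun x => (j.descFactorial i : ℝ) * poch x (j - i) := by
  induction i generalizing j with
  | zero => simp
  | succ i ih =>
      rw [Function.iterate_succ]
      cases j with
      | zero =>
          have h0 : bdiff (fun x => poch x 0) = fun y => (0 : ℝ) * poch y 0 := by
            funext y; simp [bdiff, poch_zero]
          rw [Function.comp_apply, h0, bdiff_iter_smul]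
          funext y; simp
      | succ j =>
          rw [Function.comp_apply, bdiff_poch, bdiff_iter_smul, ih]
          funext y
          rw [Nat.succ_descFactorial_succ, Nat.succ_sub_succ]
          push_cast
          ring

lemma bdiff_iter_poch_zero (i j : ℕ) :
    bdiff^[i] (fun x => poch x j) 0 = if i = j then (j.factorial : ℝ) else 0 := by
  rw [bdiff_iter_poch]
  rcases lt_trichotomy i j with h | h | h
  · have hj : j - i ≠ 0 := Nat.sub_ne_zero_of_lt h
    have h0 : poch (0 : ℝ) (j - i) = 0 := by
      obtain ⟨n, hn⟩ := Nat.exists_eq_succ_of_ne_zero hj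
      rw [hn, poch]
      exact Finset.prod_eq_zero (Finset.mem_range.mpr (Nat.succ_pos n)) (by norm_num)
    simp [h0, h.ne]
  · subst h
    simp [poch_zero, Nat.descFactorial_self]
  · rw [Nat.descFactorial_eq_zero_iff_lt.mpr h]
    simp [h.ne']

/-- The Pochhammer polynomial `∏ (X + i)`. -/
noncomputable def pochPoly (j : ℕ) : Polynomial ℝ :=
  ∏ i ∈ Finset.range j, (Polynomial.X + Polynomial.C (i : ℝ))

lemma pochPoly_eval (t : ℝ) (j : ℕ) : (pochPoly j).eval t = poch t j := by
  simp only [pochPoly, poch, Polynomial.eval_prod, Polynomial.eval_add, Polynomial.eval_X,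
    Polynomial.eval_C]

lemma pochPoly_monic (j : ℕ) : (pochPoly j).Monic :=
  Polynomial.monic_prod_of_monic _ _ fun _ _ => Polynomial.monic_X_add_C _

lemma pochPoly_natDegree (j : ℕ) : (pochPoly j).natDegree = j := by
  rw [pochPoly, Polynomial.natDegree_prod]
  · simp only [Polynomial.natDegree_X_add_C, Finset.sum_const, Finset.card_range, smul_eq_mul,
      mul_one]
  · intro i _
    exact (Polynomial.monic_X_add_C _).ne_zero

/-- Any polynomial of degree at most `k` is a combination of Pochhammer functions. -/
lemma expand_poch (k : ℕ) : ∀ p : Polynomial ℝ, p.natDegree ≤ k →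
    ∃ b : ℕ → ℝ, ∀ t : ℝ, p.eval t = ∑ j ∈ Finset.range (k + 1), b j * poch t j := by
  induction k with
  | zero =>
      intro p hp
      refine ⟨fun _ => p.coeff 0, fun t => ?_⟩
      rw [Polynomial.eq_C_of_natDegree_le_zero hp]
      simp [poch_zero]
  | succ k ih =>
      intro p hp
      set c := p.coeff (k + 1) with hc
      set q := p - Polynomial.C c * pochPoly (k + 1) with hq
      have hcoeff : (pochPoly (k + 1)).coeff (k + 1) = 1 := by
        have h := (pochPoly_monic (k + 1)).coeff_natDegree
        rwa [pochPoly_natDegree] at h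
      have hqdeg : q.natDegree ≤ k := by
        rw [Polynomial.natDegree_le_iff_coeff_eq_zero]
        intro n hn
        rcases eq_or_lt_of_le (Nat.succ_le_of_lt hn) with h | h
        · rw [hq]
          simp only [Polynomial.coeff_sub, Polynomial.coeff_C_mul]
          rw [← h, hcoeff]
          simp [hc]
        · rw [hq]
          simp only [Polynomial.coeff_sub, Polynomial.coeff_C_mul]
          rw [Polynomial.coeff_eq_zero_of_natDegree_lt (lt_of_le_of_lt hp h),
            Polynomial.coeff_eq_zero_of_natDegree_lt (by rw [pochPoly_natDegree]; exact h)]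
          simp
      obtain ⟨b, hb⟩ := ih q hqdeg
      refine ⟨fun j => if j = k + 1 then c else b j, fun t => ?_⟩
      rw [Finset.sum_range_succ]
      have hpq : p.eval t = q.eval t + c * poch t (k + 1) := by
        rw [hq]
        simp [pochPoly_eval]
      rw [hpq, hb t]
      simp only [if_pos rfl]
      congr 1
      refine Finset.sum_congr rfl fun j hj => ?_
      rw [if_neg (Nat.ne_of_lt (Finset.mem_range.mp hj))]

/-- `(2x)^k = Σ_{j=0}^k (c_{j,k}(m)/(m)_j) (x + m/2)_j`, where the
quotient `c_{j,k}(m)/(m)_j` is `(Δ₋^j/j!)(2y-m)^k |_{y=0}`. -/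
theorem pow_eq_sum_poch (m k : ℕ) (x : ℝ) :
    (2 * x) ^ k = ∑ j ∈ Finset.range (k + 1),
      (bdiff^[j] (fun y : ℝ => (2 * y - m) ^ k) 0 / (Nat.factorial j)) *
        poch (x + m / 2) j := by
  set p : Polynomial ℝ := (Polynomial.C 2 * Polynomial.X - Polynomial.C (m : ℝ)) ^ k with hp
  have hpdeg : p.natDegree ≤ k := by
    calc p.natDegree ≤ k * (Polynomial.C 2 * Polynomial.X - Polynomial.C (m : ℝ)).natDegree :=
          Polynomial.natDegree_pow_le
      _ ≤ k * 1 := by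
          apply Nat.mul_le_mul_left
          apply le_trans (Polynomial.natDegree_sub_le _ _)
          rw [max_le_iff]
          refine ⟨le_trans (Polynomial.natDegree_C_mul_le _ _) (by simp), by simp⟩
      _ = k := Nat.mul_one k
  have hpeval : ∀ t : ℝ, p.eval t = (2 * t - m) ^ k := by
    intro t; simp [hp]
  obtain ⟨b, hb⟩ := expand_poch k p hpdeg
  have hf : (fun y : ℝ => (2 * y - m) ^ k)
      = fun y => ∑ j ∈ Finset.range (k + 1), b j * poch y j := by
    funext y; rw [← hpeval y, hb y]
  have hbd : ∀ j ∈ Finset.range (k + 1),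
      bdiff^[j] (fun y : ℝ => (2 * y - m) ^ k) 0 = b j * j.factorial := by
    intro j hj
    rw [hf]
    rw [show bdiff^[j] (fun y => ∑ i ∈ Finset.range (k + 1), b i * poch y i) 0
        = ∑ i ∈ Finset.range (k + 1), bdiff^[j] (fun y => b i * poch y i) 0 from
      congrFun (bdiff_iter_sum _ _ _) 0]
    have hterm : ∀ i ∈ Finset.range (k + 1),
        bdiff^[j] (fun y => b i * poch y i) 0
          = if j = i then b i * i.factorial else 0 := by
      intro i _
      have h1 : bdiff^[j] (fun y => b i * poch y i) 0
          = b i * bdiff^[j] (fun y => poch y i) 0 :=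
        congrFun (bdiff_iter_smul _ _ _) 0
      rw [h1, bdiff_iter_poch_zero]
      split <;> simp_all
    rw [Finset.sum_congr rfl hterm, Finset.sum_ite_eq]
    simp [hj]
  calc (2 * x) ^ k = (2 * (x + m / 2) - m) ^ k := by ring_nf
    _ = ∑ j ∈ Finset.range (k + 1), b j * poch (x + m / 2) j := by
        rw [← hpeval, hb]
    _ = _ := by
        refine Finset.sum_congr rfl fun j hj => ?_
        rw [hbd j hj]
        have hfac : (j.factorial : ℝ) ≠ 0 := Nat.cast_ne_zero.mpr j.factorial_ne_zero
        field_simp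
end
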